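/- For all r, s ≥ 0, if D₁ ∈ 𝒟'_r(A) and D₂ ∈ 𝒟'_s(A), then D₁∘D₂ ∈ 𝒟_{r+s}(A). -/

import Mathlib

/-- `𝒟_n(A)`: the k-submodule of `End_k(A)` spanned by
`{l_a ∘ φ ∘ l_b : a b : A, φ ∈ 𝒟'_n(A)}`, where
`𝒟'_n(A) = {φ : l_t ∘ φ - φ ∘ l_t ∈ 𝒟_{n-1}(A) for all t}` and `𝒟_{-1}(A) = 0`. -/
noncomputable def Dnc (k : Type*) (A : Type*) [CommRing k] [Ring A] [Algebra k A] :
    ℕ → Submodule k (Module.End k A)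
  | 0 => Submodule.span k {ψ | ∃ (a b : A) (φ : Module.End k A),
      (∀ t : A, LinearMap.mulLeft k t * φ - φ * LinearMap.mulLeft k t = 0) ∧
      ψ = LinearMap.mulLeft k a * φ * LinearMap.mulLeft k b}
  | (n + 1) => Submodule.span k {ψ | ∃ (a b : A) (φ : Module.End k A),
      (∀ t : A, LinearMap.mulLeft k t * φ - φ * LinearMap.mulLeft k t ∈ Dnc k A n) ∧
      ψ = LinearMap.mulLeft k a * φ * LinearMap.mulLeft k b}

/-- `𝒟'_n(A) = {φ ∈ End_k(A) : l_t ∘ φ - φ ∘ l_t ∈ 𝒟_{n-1}(A) for all t ∈ A}`,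
with `𝒟_{-1}(A) = 0`. -/
noncomputable def Dnc' (k : Type*) (A : Type*) [CommRing k] [Ring A] [Algebra k A] :
    ℕ → Set (Module.End k A)
  | 0 => {φ | ∀ t : A, LinearMap.mulLeft k t * φ - φ * LinearMap.mulLeft k t = 0}
  | (n + 1) => {φ | ∀ t : A, LinearMap.mulLeft k t * φ - φ * LinearMap.mulLeft k t ∈ Dnc k A n}

/-! Induction on `r + s`, proving at the same time that `𝒟_r(A) 𝒟_s(A) ⊆ 𝒟_{r+s}(A)`.
The Leibniz rule `[l_t, φψ] = [l_t, φ]ψ + φ[l_t, ψ]` puts the commutator of `φψ` in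
`𝒟_{r-1} 𝒟_s + 𝒟_r 𝒟_{s-1}`, which the smaller case places in `𝒟_{r+s-1}`. For the products of
generators, `(l_a φ l_b)(l_c ψ l_d) = l_a (l_{bc} φψ - [l_{bc}, φ] ψ) l_d` reduces to that case,
because `𝒟_n(A)` is stable under composition with left multiplications on either side. -/

theorem Ring.lie_mul {R : Type*} [Ring R] (x y z : R) : ⁅x, y * z⁆ = ⁅x, y⁆ * z + y * ⁅x, z⁆ := by
  simp only [Ring.lie_def, mul_sub, sub_mul, mul_assoc]
  abel

section Dnc

variable {k A : Type*} [CommRing k] [Ring A] [Algebra k A]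

local notation "L" => LinearMap.mulLeft k

variable (k A) in
noncomputable def DncPred : ℕ → Submodule k (Module.End k A)
  | 0 => ⊥
  | n + 1 => Dnc k A n

theorem mem_Dnc'_iff {n : ℕ} {φ : Module.End k A} :
    φ ∈ Dnc' k A n ↔ ∀ t : A, ⁅L t, φ⁆ ∈ DncPred k A n := by
  cases n <;> simp [Dnc', DncPred, Ring.lie_def]

theorem Dnc_eq_span (n : ℕ) :
    Dnc k A n = Submodule.span k {ψ | ∃ (a b : A) (φ : Module.End k A), φ ∈ Dnc' k A n ∧
      ψ = L a * φ * L b} := by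
  cases n <;> rfl

theorem mem_Dnc_of_mem_Dnc' {n : ℕ} {φ : Module.End k A} (h : φ ∈ Dnc' k A n) :
    φ ∈ Dnc k A n := by
  rw [Dnc_eq_span]
  exact Submodule.subset_span ⟨1, 1, φ, h, by ext; simp⟩

theorem mulLeft_mul_mem_Dnc {n : ℕ} (a : A) {x : Module.End k A} (hx : x ∈ Dnc k A n) :
    L a * x ∈ Dnc k A n := by
  rw [Dnc_eq_span] at hx ⊢
  refine (Submodule.map_span_le (LinearMap.mulLeft k (L a)) _ _).2 ?_ ⟨x, hx, rfl⟩
  rintro _ ⟨c, b, φ, hφ, rfl⟩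
  exact Submodule.subset_span ⟨a * c, b, φ, hφ, by
    simp only [LinearMap.mulLeft_apply, LinearMap.mulLeft_mul, ← Module.End.mul_eq_comp, mul_assoc]⟩

theorem mul_mulLeft_mem_Dnc {n : ℕ} (b : A) {x : Module.End k A} (hx : x ∈ Dnc k A n) :
    x * L b ∈ Dnc k A n := by
  rw [Dnc_eq_span] at hx ⊢
  refine (Submodule.map_span_le (LinearMap.mulRight k (L b)) _ _).2 ?_ ⟨x, hx, rfl⟩
  rintro _ ⟨a, c, φ, hφ, rfl⟩
  exact Submodule.subset_span ⟨a, c * b, φ, hφ, by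
    simp only [LinearMap.mulRight_apply, LinearMap.mulLeft_mul, ← Module.End.mul_eq_comp,
      mul_assoc]⟩

theorem Dnc_mono_of_DncPred_le {m n : ℕ} (h : DncPred k A m ≤ DncPred k A n) :
    Dnc k A m ≤ Dnc k A n := by
  rw [Dnc_eq_span, Dnc_eq_span]
  refine Submodule.span_mono ?_
  rintro _ ⟨a, b, φ, hφ, rfl⟩
  exact ⟨a, b, φ, mem_Dnc'_iff.2 fun t ↦ h (mem_Dnc'_iff.1 hφ t), rfl⟩

theorem Dnc_le_Dnc_succ (n : ℕ) : Dnc k A n ≤ Dnc k A (n + 1) := by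
  induction n with
  | zero => exact Dnc_mono_of_DncPred_le bot_le
  | succ n ih => exact Dnc_mono_of_DncPred_le ih

theorem DncPred_le_Dnc (n : ℕ) : DncPred k A n ≤ Dnc k A n := by
  cases n with
  | zero => exact bot_le
  | succ n => exact Dnc_le_Dnc_succ n

theorem DncPred_mul_le {r s : ℕ}
    (h : ∀ r' < r, Dnc k A r' * Dnc k A s ≤ Dnc k A (r' + s)) :
    DncPred k A r * Dnc k A s ≤ DncPred k A (r + s) := by
  cases r with
  | zero => simp [DncPred]
  | succ r => simpa [DncPred, Nat.succ_add] using h r r.lt_succ_self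

theorem mul_DncPred_le {r s : ℕ}
    (h : ∀ s' < s, Dnc k A r * Dnc k A s' ≤ Dnc k A (r + s')) :
    Dnc k A r * DncPred k A s ≤ DncPred k A (r + s) := by
  cases s with
  | zero => simp [DncPred]
  | succ s => simpa [DncPred, Nat.add_succ] using h s s.lt_succ_self

section Induction

variable {r s : ℕ} (ih : ∀ r' s', r' + s' < r + s → Dnc k A r' * Dnc k A s' ≤ Dnc k A (r' + s'))
include ih

theorem mul_mem_Dnc'_of_lt {φ ψ : Module.End k A} (hφ : φ ∈ Dnc' k A r) (hψ : ψ ∈ Dnc' k A s) :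
    φ * ψ ∈ Dnc' k A (r + s) := by
  refine mem_Dnc'_iff.2 fun t ↦ ?_
  rw [Ring.lie_mul]
  refine add_mem (DncPred_mul_le (fun r' hr' ↦ ih r' s (by omega)) ?_) (mul_DncPred_le
    (fun s' hs' ↦ ih r s' (by omega)) ?_)
  · exact Submodule.mul_mem_mul (mem_Dnc'_iff.1 hφ t) (mem_Dnc_of_mem_Dnc' hψ)
  · exact Submodule.mul_mem_mul (mem_Dnc_of_mem_Dnc' hφ) (mem_Dnc'_iff.1 hψ t)

theorem Dnc_mul_le_of_lt : Dnc k A r * Dnc k A s ≤ Dnc k A (r + s) := by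
  rw [Dnc_eq_span, Dnc_eq_span, Submodule.span_mul_span, Submodule.span_le]
  rintro _ ⟨_, ⟨a, b, φ, hφ, rfl⟩, _, ⟨c, d, ψ, hψ, rfl⟩, rfl⟩
  have hsplit : L a * φ * L b * (L c * ψ * L d)
      = L a * (L (b * c) * (φ * ψ) - ⁅L (b * c), φ⁆ * ψ) * L d := by
    simp only [LinearMap.mulLeft_mul, ← Module.End.mul_eq_comp, Ring.lie_def, sub_mul, mul_assoc,
      sub_sub_cancel]
  change _ * _ ∈ _
  rw [hsplit]
  refine mul_mulLeft_mem_Dnc _ (mulLeft_mul_mem_Dnc _ (sub_mem ?_ ?_))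
  · exact mulLeft_mul_mem_Dnc _ (mem_Dnc_of_mem_Dnc' (mul_mem_Dnc'_of_lt ih hφ hψ))
  · refine DncPred_le_Dnc _ (DncPred_mul_le (fun r' hr' ↦ ih r' s (by omega)) ?_)
    exact Submodule.mul_mem_mul (mem_Dnc'_iff.1 hφ _) (mem_Dnc_of_mem_Dnc' hψ)

end Induction

theorem Dnc_mul_le (r s : ℕ) : Dnc k A r * Dnc k A s ≤ Dnc k A (r + s) := by
  induction hn : r + s using Nat.strong_induction_on generalizing r s with
  | _ n ih =>
    subst hn
    exact Dnc_mul_le_of_lt fun r' s' h ↦ ih _ h r' s' rfl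

end Dnc

/-- If `D₁ ∈ 𝒟'_r(A)` and `D₂ ∈ 𝒟'_s(A)` then `D₁ ∘ D₂ ∈ 𝒟_{r+s}(A)`. -/
theorem Dnc'_comp_Dnc' (k : Type*) (A : Type*) [CommRing k] [Ring A] [Algebra k A]
    (r s : ℕ) (D₁ D₂ : Module.End k A) (h₁ : D₁ ∈ Dnc' k A r) (h₂ : D₂ ∈ Dnc' k A s) :
    D₁ * D₂ ∈ Dnc k A (r + s) :=
  mem_Dnc_of_mem_Dnc' (mul_mem_Dnc'_of_lt (fun r' s' _ ↦ Dnc_mul_le r' s') h₁ h₂)
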